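/- arXiv:1412.3518 — 3 statements merged into one kernel-verified Lean document; each statement's English description precedes it below -/
import Mathlib

section
/- If M' is a conservative extension of a recursive causal model M with endogenous variables V, then for every context u, every subset W of V, every setting w of W, every variable X in V, and every value x, the formula [W ← w](X = x) holds in (M, u) if and only if it holds in (M', u). (That is, the basic definition of conservative extension, which quantifies only over settings of all variables in V other than X, implies agreement on interventions on arbitrary subsets of V.) -/
open Classical

/-- A causal model over variable namespace ℕ (values are also coded as ℕ).
`V` is the finite set of endogenous variables; `F X ctx g` gives the value of the
structural equation for `X` given a context `ctx` (assignment to the exogenous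
variables) and an assignment `g` to the endogenous variables. -/
structure CM where
  V : Finset ℕ
  F : ℕ → (ℕ → ℕ) → (ℕ → ℕ) → ℕ

/-- `v` is a solution of all the structural equations of `M` in context `ctx`
(pinned to `0` outside `V` so that worlds are canonical). -/
def IsSol (M : CM) (ctx v : ℕ → ℕ) : Prop :=
  (∀ X ∈ M.V, v X = M.F X ctx v) ∧ ∀ X, X ∉ M.V → v X = 0

/-- `M` is recursive (acyclic): there is a total order on `V` such that each
equation depends only on strictly earlier endogenous variables. -/
def Recursive (M : CM) : Prop :=
  ∃ ord : ℕ → ℕ, Set.InjOn ord ↑M.V ∧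
    ∀ X ∈ M.V, ∀ ctx g h, (∀ Y ∈ M.V, ord Y < ord X → g Y = h Y) →
      M.F X ctx g = M.F X ctx h

/-- The model obtained by intervening according to the partial assignment `I`. -/
def CM.intervene (M : CM) (I : ℕ → Option ℕ) : CM :=
  ⟨M.V, fun X ctx g => (I X).getD (M.F X ctx g)⟩

/-- The intervention setting the variables in `S` to the values given by `f`. -/
def doSet (S : Finset ℕ) (f : ℕ → ℕ) : ℕ → Option ℕ :=
  fun Y => if Y ∈ S then some (f Y) else none

/-- `(M, ctx) ⊨ [I](X = x)`. -/
def Sat (M : CM) (ctx : ℕ → ℕ) (I : ℕ → Option ℕ) (X x : ℕ) : Prop :=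
  ∀ v, IsSol (M.intervene I) ctx v → v X = x

/-- Boolean combinations of primitive events `X = x`. -/
inductive BForm where
  | prim : ℕ → ℕ → BForm
  | not : BForm → BForm
  | and : BForm → BForm → BForm

def BForm.eval (v : ℕ → ℕ) : BForm → Prop
  | .prim X x => v X = x
  | .not φ => ¬ BForm.eval v φ
  | .and φ ψ => BForm.eval v φ ∧ BForm.eval v ψ

def BForm.vars : BForm → Finset ℕ
  | .prim X _ => {X}
  | .not φ => φ.vars
  | .and φ ψ => φ.vars ∪ ψ.vars

/-- `(M, ctx) ⊨ [I]φ`. -/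
def SatF (M : CM) (ctx : ℕ → ℕ) (I : ℕ → Option ℕ) (φ : BForm) : Prop :=
  ∀ v, IsSol (M.intervene I) ctx v → φ.eval v

/-- `M'` is a conservative extension of `M`: same exogenous variables (shared
namespace), `M.V ⊆ M'.V`, and for every context, every `X ∈ M.V`, and every
setting of the other variables of `M`, the intervened value of `X` agrees. -/
def ConsExt (M M' : CM) : Prop :=
  M.V ⊆ M'.V ∧
  ∀ ctx x, ∀ X ∈ M.V, ∀ w : ℕ → ℕ,
    (Sat M ctx (doSet (M.V.erase X) w) X x ↔ Sat M' ctx (doSet (M.V.erase X) w) X x)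

/-- The intervention `X⃗ ← x⃗', W⃗ ← w⃗` used in AC2(a). -/
def witI (Xs : Finset ℕ) (x' : ℕ → ℕ) (W : Finset ℕ) (w : ℕ → ℕ) : ℕ → Option ℕ :=
  fun Y => if Y ∈ Xs then some (x' Y) else if Y ∈ W then some (w Y) else none

/-- The intervention `X⃗ ← x⃗, Z⃗' ← z⃗, W⃗' ← w⃗` used in AC2(b) (here `vs` is the
actual solution, providing the actual values `z⃗`). -/
def acbI (Xs : Finset ℕ) (xv : ℕ → ℕ) (Z' : Finset ℕ) (vs : ℕ → ℕ)
    (W' : Finset ℕ) (w : ℕ → ℕ) : ℕ → Option ℕ :=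
  fun Y => if Y ∈ Xs then some (xv Y) else if Y ∈ Z' then some (vs Y)
    else if Y ∈ W' then some (w Y) else none

/-- `(W, w, x')` is a witness for AC2 (updated version, with AC2(b)). -/
def Wit (M : CM) (ctx : ℕ → ℕ) (Xs : Finset ℕ) (xv : ℕ → ℕ) (φ : BForm)
    (W : Finset ℕ) (w x' : ℕ → ℕ) : Prop :=
  W ⊆ M.V ∧ Xs ⊆ M.V \ W ∧
  SatF M ctx (witI Xs x' W w) (BForm.not φ) ∧
  ∀ vs, IsSol M ctx vs → ∀ W' ⊆ W, ∀ Z' ⊆ M.V \ W,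
    SatF M ctx (acbI Xs xv Z' vs W' w) φ

/-- `(W, w, x')` is a witness for AC2 in the original HP sense (with AC2(b'):
only `W` itself, not its subsets, is set to `w`). -/
def Wit' (M : CM) (ctx : ℕ → ℕ) (Xs : Finset ℕ) (xv : ℕ → ℕ) (φ : BForm)
    (W : Finset ℕ) (w x' : ℕ → ℕ) : Prop :=
  W ⊆ M.V ∧ Xs ⊆ M.V \ W ∧
  SatF M ctx (witI Xs x' W w) (BForm.not φ) ∧
  ∀ vs, IsSol M ctx vs → ∀ Z' ⊆ M.V \ W,
    SatF M ctx (acbI Xs xv Z' vs W w) φ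

/-- AC1: `X⃗ = x⃗` and `φ` hold in the actual world. -/
def AC1 (M : CM) (ctx : ℕ → ℕ) (Xs : Finset ℕ) (xv : ℕ → ℕ) (φ : BForm) : Prop :=
  ∀ v, IsSol M ctx v → (∀ X ∈ Xs, v X = xv X) ∧ φ.eval v

def PreCause (M : CM) (ctx : ℕ → ℕ) (Xs : Finset ℕ) (xv : ℕ → ℕ) (φ : BForm) : Prop :=
  AC1 M ctx Xs xv φ ∧ ∃ W w x', Wit M ctx Xs xv φ W w x'

/-- The (updated) HP definition of actual cause: AC1 ∧ AC2 ∧ AC3. -/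
def IsCause (M : CM) (ctx : ℕ → ℕ) (Xs : Finset ℕ) (xv : ℕ → ℕ) (φ : BForm) : Prop :=
  PreCause M ctx Xs xv φ ∧ ∀ Xs' ⊂ Xs, ¬ PreCause M ctx Xs' xv φ

def PreCause' (M : CM) (ctx : ℕ → ℕ) (Xs : Finset ℕ) (xv : ℕ → ℕ) (φ : BForm) : Prop :=
  AC1 M ctx Xs xv φ ∧ ∃ W w x', Wit' M ctx Xs xv φ W w x'

/-- The original HP definition of actual cause (with AC2(b')). -/
def IsCause' (M : CM) (ctx : ℕ → ℕ) (Xs : Finset ℕ) (xv : ℕ → ℕ) (φ : BForm) : Prop :=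
  PreCause' M ctx Xs xv φ ∧ ∀ Xs' ⊂ Xs, ¬ PreCause' M ctx Xs' xv φ

/-- An extended causal model: a causal model with a normality preorder on worlds. -/
structure ECM extends CM where
  normGE : (ℕ → ℕ) → (ℕ → ℕ) → Prop
  normGE_refl : ∀ s, normGE s s
  normGE_trans : ∀ s t u, normGE s t → normGE t u → normGE s u

/-- A world of `M`: an assignment to the endogenous variables (canonically `0` elsewhere). -/
def World (M : CM) (s : ℕ → ℕ) : Prop := ∀ X, X ∉ M.V → s X = 0

/-- The world determined by the intervention `I` in context `ctx` is at least as
normal as the actual world `s_ctx`. -/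
def NormAbove (M : ECM) (ctx : ℕ → ℕ) (I : ℕ → Option ℕ) : Prop :=
  ∀ s su, IsSol (M.toCM.intervene I) ctx s → IsSol M.toCM ctx su → M.normGE s su

/-- Witness for the extended HP definition: AC2 together with AC2(a⁺). -/
def EWit (M : ECM) (ctx : ℕ → ℕ) (Xs : Finset ℕ) (xv : ℕ → ℕ) (φ : BForm)
    (W : Finset ℕ) (w x' : ℕ → ℕ) : Prop :=
  Wit M.toCM ctx Xs xv φ W w x' ∧ NormAbove M ctx (witI Xs x' W w)

def EPreCause (M : ECM) (ctx : ℕ → ℕ) (Xs : Finset ℕ) (xv : ℕ → ℕ) (φ : BForm) : Prop :=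
  AC1 M.toCM ctx Xs xv φ ∧ ∃ W w x', EWit M ctx Xs xv φ W w x'

/-- The extended (normality-sensitive) HP definition of actual cause. -/
def EIsCause (M : ECM) (ctx : ℕ → ℕ) (Xs : Finset ℕ) (xv : ℕ → ℕ) (φ : BForm) : Prop :=
  EPreCause M ctx Xs xv φ ∧ ∀ Xs' ⊂ Xs, ¬ EPreCause M ctx Xs' xv φ

/-- In world `s`, variable `v0` takes on a value other than that specified by
the equations of `M` in context `ctx`. -/
def Deviates (M : CM) (ctx : ℕ → ℕ) (v0 : ℕ) (s : ℕ → ℕ) : Prop :=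
  ∀ v, IsSol (M.intervene (doSet (M.V.erase v0) s)) ctx v → v v0 ≠ s v0

/-- `(M, ctx)` respects the equations for `v0`: any world in which `v0` deviates
from its equation-determined value is not at least as normal as the actual world. -/
def Respects (M : ECM) (ctx : ℕ → ℕ) (v0 : ℕ) : Prop :=
  ∀ s, World M.toCM s → Deviates M.toCM ctx v0 s →
    ∀ su, IsSol M.toCM ctx su → ¬ M.normGE s su

/-- Conservative extension of extended causal models: conservative extension of
the underlying models plus condition CE on the normality preorders. -/
def EConsExt (M M' : ECM) : Prop :=
  ConsExt M.toCM M'.toCM ∧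
  ∀ ctx (W : Finset ℕ), W ⊆ M.V → ∀ w : ℕ → ℕ,
    (NormAbove M ctx (doSet W w) ↔ NormAbove M' ctx (doSet W w))

/-- Indicator of a proposition, used to express Boolean structural equations. -/
noncomputable def bI (p : Prop) : ℕ := if p then 1 else 0

/-- `Recursive M` unfolds to `∃ ord, Set.InjOn ord ↑M.V ∧ IsCausalOrder M ord`. -/
def IsCausalOrder (M : CM) (ord : ℕ → ℕ) : Prop :=
  ∀ X ∈ M.V, ∀ ctx g h, (∀ Y ∈ M.V, ord Y < ord X → g Y = h Y) →
    M.F X ctx g = M.F X ctx h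

lemma doSet_of_mem {S : Finset ℕ} {f : ℕ → ℕ} {Y : ℕ} (hY : Y ∈ S) : doSet S f Y = some (f Y) :=
  if_pos hY

lemma doSet_of_notMem {S : Finset ℕ} {f : ℕ → ℕ} {Y : ℕ} (hY : Y ∉ S) : doSet S f Y = none :=
  if_neg hY

lemma IsSol.intervene_apply {M : CM} {I : ℕ → Option ℕ} {ctx v : ℕ → ℕ}
    (hv : IsSol (M.intervene I) ctx v) {X : ℕ} (hX : X ∈ M.V) :
    v X = (I X).getD (M.F X ctx v) :=
  hv.1 X hX

namespace IsCausalOrder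

variable {M : CM} {ord : ℕ → ℕ}

lemma intervene (hord : IsCausalOrder M ord) (I : ℕ → Option ℕ) :
    IsCausalOrder (M.intervene I) ord := by
  intro X hX ctx g h hgh
  show (I X).getD _ = (I X).getD _
  rw [hord X hX ctx g h hgh]

lemma exists_isSol (hord : IsCausalOrder M ord) (ctx : ℕ → ℕ) : ∃ v, IsSol M ctx v := by
  let v : ℕ → ℕ := (measure ord).wf.fix fun X rec =>
    if X ∈ M.V then M.F X ctx (fun Y => if h : ord Y < ord X then rec Y h else 0) else 0
  have hv : ∀ X, v X =
      if X ∈ M.V then M.F X ctx (fun Y => if ord Y < ord X then v Y else 0) else 0 := fun X => by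
    simp only [v]
    rw [WellFounded.fix_eq]
    simp only [dite_eq_ite]
  refine ⟨v, fun X hX => ?_, fun X hX => by rw [hv, if_neg hX]⟩
  rw [hv, if_pos hX]
  exact hord X hX ctx _ _ fun Y _ hY => if_pos hY

lemma eq_of_lt (hord : IsCausalOrder M ord) {I I' : ℕ → Option ℕ} {ctx u v : ℕ → ℕ}
    (hu : IsSol (M.intervene I) ctx u) (hv : IsSol (M.intervene I') ctx v) {n : ℕ}
    (h : ∀ T ∈ M.V, ord T < n → u T = v T ∨ I T = none ∧ I' T = none) :
    ∀ T ∈ M.V, ord T < n → u T = v T := by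
  intro T hT hTn
  induction hm : ord T using Nat.strong_induction_on generalizing T with
  | _ m ih =>
    obtain heq | ⟨hI, hI'⟩ := h T hT hTn
    · exact heq
    rw [hu.intervene_apply hT, hv.intervene_apply hT, hI, hI']
    exact hord T hT ctx u v fun Y hY hYT => ih (ord Y) (hm ▸ hYT) Y hY (by omega) rfl

lemma isSol_unique (hord : IsCausalOrder M ord) {I : ℕ → Option ℕ} {ctx u v : ℕ → ℕ}
    (hu : IsSol (M.intervene I) ctx u) (hv : IsSol (M.intervene I) ctx v) : u = v := by
  funext T
  by_cases hT : T ∈ M.V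
  · refine hord.eq_of_lt hu hv (n := ord T + 1) (fun T' hT' _ => ?_) T hT (by omega)
    cases hI : I T' with
    | none => exact Or.inr ⟨rfl, rfl⟩
    | some a => left; rw [hu.intervene_apply hT', hv.intervene_apply hT', hI,
      Option.getD_some, Option.getD_some]
  · rw [hu.2 T hT, hv.2 T hT]

lemma sat_iff_of_isSol (hord : IsCausalOrder M ord) {I : ℕ → Option ℕ} {ctx v : ℕ → ℕ}
    (hv : IsSol (M.intervene I) ctx v) {X x : ℕ} : Sat M ctx I X x ↔ v X = x :=
  ⟨fun h => h v hv, fun h u hu => by rwa [hord.isSol_unique hu hv]⟩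

lemma sat_doSet_erase (hord : IsCausalOrder M ord) {ctx v : ℕ → ℕ} {Z : ℕ} (hZ : Z ∈ M.V)
    (hvZ : v Z = M.F Z ctx v) : Sat M ctx (doSet (M.V.erase Z) v) Z (v Z) := by
  intro s hs
  rw [hs.intervene_apply hZ, doSet_of_notMem (Finset.notMem_erase Z M.V), Option.getD_none, hvZ]
  refine hord Z hZ ctx s v fun Y hY hYZ => ?_
  have hYe : Y ∈ M.V.erase Z := Finset.mem_erase.2 ⟨fun h => (h ▸ hYZ).false, hY⟩
  rw [hs.intervene_apply hY, doSet_of_mem hYe, Option.getD_some]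

end IsCausalOrder

/-- Induction along the order of `M'`: at `Z ∈ M.V \ W`, fix the other variables of `M` to
their values in `v`; `M` then forces `Z = v Z`, hence so does `M'`, and the solution of `M'`
under this intervention agrees with `v'` below `Z` by the induction hypothesis. -/
lemma ConsExt.isSol_eq {M M' : CM} {ord : ℕ → ℕ} (hord : IsCausalOrder M ord)
    (hM' : Recursive M') (h : ConsExt M M') {ctx : ℕ → ℕ} {W : Finset ℕ} (hW : W ⊆ M.V) {w v v' : ℕ → ℕ}
    (hv : IsSol (M.intervene (doSet W w)) ctx v) (hv' : IsSol (M'.intervene (doSet W w)) ctx v') :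
    ∀ Z ∈ M.V, v' Z = v Z := by
  obtain ⟨ord', hinj', hord' : IsCausalOrder M' ord'⟩ := hM'
  intro Z hZ
  induction hn : ord' Z using Nat.strong_induction_on generalizing Z with
  | _ n ih =>
    by_cases hZW : Z ∈ W
    · rw [hv'.intervene_apply (h.1 hZ), hv.intervene_apply hZ, doSet_of_mem hZW,
        Option.getD_some, Option.getD_some]
    have hvZ : v Z = M.F Z ctx v := by
      rw [hv.intervene_apply hZ, doSet_of_notMem hZW, Option.getD_none]
    obtain ⟨u, hu⟩ := (hord'.intervene (doSet (M.V.erase Z) v)).exists_isSol ctx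
    have huZ : u Z = v Z := (h.2 ctx (v Z) Z hZ v).1 (hord.sat_doSet_erase hZ hvZ) u hu
    rw [← huZ]
    refine hord'.eq_of_lt hv' hu (n := ord' Z + 1) (fun T hT hTZ => ?_) Z (h.1 hZ) (by omega)
    by_cases hTM : T ∈ M.V
    · by_cases hTZ' : T = Z
      · subst hTZ'
        exact Or.inr ⟨doSet_of_notMem hZW, doSet_of_notMem (Finset.notMem_erase T M.V)⟩
      have hlt : ord' T < n :=
        hn ▸ lt_of_le_of_ne (by omega) fun he => hTZ' (hinj' (h.1 hTM) (h.1 hZ) he)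
      left
      rw [hu.intervene_apply hT, doSet_of_mem (Finset.mem_erase.2 ⟨hTZ', hTM⟩), Option.getD_some]
      exact ih _ hlt T hTM rfl
    · exact Or.inr ⟨doSet_of_notMem fun hTW => hTM (hW hTW),
        doSet_of_notMem fun hTe => hTM (Finset.mem_of_mem_erase hTe)⟩

/-- a conservative extension agrees with the original model on
interventions on arbitrary subsets of the original endogenous variables. -/
theorem consExt_arbitrary_subsets (M M' : CM) (hM : Recursive M) (hM' : Recursive M')
    (h : ConsExt M M') (ctx : ℕ → ℕ) (W : Finset ℕ) (hW : W ⊆ M.V) (w : ℕ → ℕ)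
    (X : ℕ) (hX : X ∈ M.V) (x : ℕ) :
    Sat M ctx (doSet W w) X x ↔ Sat M' ctx (doSet W w) X x := by
  obtain ⟨ord, -, hord : IsCausalOrder M ord⟩ := hM
  obtain ⟨ord', hinj', hord' : IsCausalOrder M' ord'⟩ := hM'
  obtain ⟨v, hv⟩ := (hord.intervene (doSet W w)).exists_isSol ctx
  obtain ⟨v', hv'⟩ := (hord'.intervene (doSet W w)).exists_isSol ctx
  rw [hord.sat_iff_of_isSol hv, hord'.sat_iff_of_isSol hv',
    h.isSol_eq hord ⟨ord', hinj', hord'⟩ hW hv hv' X hX]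
end

section
/- If M' is a conservative extension of a recursive causal model M with endogenous variables V, then for every context u and every causal formula φ that mentions only variables in V, (M, u) ⊨ φ if and only if (M', u) ⊨ φ. -/
open Classical

/-!
The unique solution `v'` of `M'[W ← w]` satisfies, at every `X ∈ V ∖ W`, the equation of `M`
itself: pinning all other variables of `V` at their `v'`-values leaves `v'` a solution of `M'`,
so conservativity makes `M` predict the value `v' X` for `X`, and in `M` that value is
`F X (v')`. Hence the restriction of `v'` to `V` is the unique solution of `M[W ← w]`, and `φ`,
mentioning only `V`, takes the same value on both.
-/

/-- Truncating the argument to `ord`-earlier variables makes the recursion well founded; for a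
recursive model it does not change the value of `M.F X`. -/
noncomputable def recSol (M : CM) (ord ctx : ℕ → ℕ) (X : ℕ) : ℕ :=
  if X ∈ M.V then M.F X ctx (fun Y => if ord Y < ord X then recSol M ord ctx Y else 0) else 0
termination_by ord X

namespace Recursive

variable {M : CM}

theorem F_congr (hM : Recursive M) {X : ℕ} (hX : X ∈ M.V) (ctx : ℕ → ℕ)
    {g h : ℕ → ℕ} (hgh : ∀ Y ∈ M.V, Y ≠ X → g Y = h Y) : M.F X ctx g = M.F X ctx h := by
  obtain ⟨ord, -, hdep⟩ := hM
  exact hdep X hX ctx g h fun Y hY hlt => hgh Y hY (by rintro rfl; exact lt_irrefl _ hlt)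

theorem intervene (hM : Recursive M) (I : ℕ → Option ℕ) : Recursive (M.intervene I) := by
  obtain ⟨ord, hinj, hdep⟩ := hM
  refine ⟨ord, hinj, fun X hX ctx g h hgh => ?_⟩
  change (I X).getD (M.F X ctx g) = (I X).getD (M.F X ctx h)
  rw [hdep X hX ctx g h hgh]

theorem exists_isSol (hM : Recursive M) (ctx : ℕ → ℕ) : ∃ v, IsSol M ctx v := by
  obtain ⟨ord, -, hdep⟩ := hM
  refine ⟨recSol M ord ctx, fun X hX => ?_, fun X hX => by rw [recSol, if_neg hX]⟩
  rw [recSol, if_pos hX]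
  exact hdep X hX ctx _ _ fun Y _ hlt => by rw [if_pos hlt]

theorem eq_of_isSol (hM : Recursive M) {ctx v₁ v₂ : ℕ → ℕ}
    (h₁ : IsSol M ctx v₁) (h₂ : IsSol M ctx v₂) : v₁ = v₂ := by
  obtain ⟨ord, -, hdep⟩ := hM
  have agree : ∀ n X, ord X = n → v₁ X = v₂ X := by
    intro n
    induction n using Nat.strong_induction_on with
    | _ n ih =>
      rintro X rfl
      by_cases hX : X ∈ M.V
      · rw [h₁.1 X hX, h₂.1 X hX]
        exact hdep X hX ctx v₁ v₂ fun Y _ hlt => ih _ hlt Y rfl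
      · rw [h₁.2 X hX, h₂.2 X hX]
  exact funext fun X => agree _ X rfl

theorem satF_iff (hM : Recursive M) {ctx v : ℕ → ℕ} {I : ℕ → Option ℕ}
    (hv : IsSol (M.intervene I) ctx v) (φ : BForm) : SatF M ctx I φ ↔ φ.eval v :=
  ⟨fun hφ => hφ v hv, fun hφ _ hu => (hM.intervene I).eq_of_isSol hu hv ▸ hφ⟩

theorem isSol_indicator (hM : Recursive M) {ctx v : ℕ → ℕ} {I : ℕ → Option ℕ}
    (hv : ∀ X ∈ M.V, v X = (I X).getD (M.F X ctx v)) :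
    IsSol (M.intervene I) ctx ((M.V : Set ℕ).indicator v) := by
  refine ⟨fun X (hX : X ∈ M.V) => ?_, fun X hX => Set.indicator_of_notMem hX v⟩
  change _ = (I X).getD (M.F X ctx _)
  rw [Set.indicator_of_mem (Finset.mem_coe.2 hX), hv X hX,
    hM.F_congr hX ctx fun Y hY _ => (Set.indicator_of_mem (Finset.mem_coe.2 hY) v).symm]

end Recursive

theorem IsSol.intervene_doSet_self {M : CM} {ctx v w : ℕ → ℕ} {W S : Finset ℕ}
    (hv : IsSol (M.intervene (doSet W w)) ctx v) (hWS : W ⊆ S) :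
    IsSol (M.intervene (doSet S v)) ctx v := by
  refine ⟨fun X hX => ?_, hv.2⟩
  by_cases hXS : X ∈ S
  · simp [CM.intervene, doSet, hXS]
  · have hXW : X ∉ W := fun h => hXS (hWS h)
    simpa [CM.intervene, doSet, hXS, hXW] using hv.1 X hX

theorem ConsExt.eq_F_of_isSol {M M' : CM} (h : ConsExt M M') (hM : Recursive M)
    (hM' : Recursive M') {ctx v : ℕ → ℕ} {X : ℕ} (hX : X ∈ M.V)
    (hv : IsSol (M'.intervene (doSet (M.V.erase X) v)) ctx v) : v X = M.F X ctx v := by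
  have hSat' : Sat M' ctx (doSet (M.V.erase X) v) X (v X) :=
    (hM'.satF_iff hv (.prim X (v X))).2 rfl
  obtain ⟨s, hs⟩ := (hM.intervene (doSet (M.V.erase X) v)).exists_isSol ctx
  have hsX : s X = v X := ((h.2 ctx (v X) X hX v).2 hSat') s hs
  have hs_eq : ∀ Y ∈ M.V, Y ≠ X → s Y = v Y := fun Y hY hYX => by
    simpa [CM.intervene, doSet, hYX, hY] using hs.1 Y hY
  calc v X = s X := hsX.symm
    _ = M.F X ctx s := by simpa [CM.intervene, doSet] using hs.1 X hX
    _ = M.F X ctx v := hM.F_congr hX ctx hs_eq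

theorem BForm.eval_congr (φ : BForm) {v₁ v₂ : ℕ → ℕ}
    (h : ∀ X ∈ φ.vars, v₁ X = v₂ X) : φ.eval v₁ ↔ φ.eval v₂ := by
  induction φ with
  | prim X x => simp only [BForm.eval, h X (by simp [BForm.vars])]
  | not φ ih => exact not_congr (ih h)
  | and φ ψ ihφ ihψ =>
    exact and_congr (ihφ fun X hX => h X (by simp [BForm.vars, hX]))
      (ihψ fun X hX => h X (by simp [BForm.vars, hX]))

/-- a conservative extension agrees with the original model on all
causal formulas mentioning only the original endogenous variables. -/
theorem consExt_causal_formulas (M M' : CM) (hM : Recursive M) (hM' : Recursive M')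
    (h : ConsExt M M') (ctx : ℕ → ℕ) (W : Finset ℕ) (hW : W ⊆ M.V) (w : ℕ → ℕ)
    (φ : BForm) (hφ : φ.vars ⊆ M.V) :
    SatF M ctx (doSet W w) φ ↔ SatF M' ctx (doSet W w) φ := by
  obtain ⟨v', hv'⟩ := (hM'.intervene (doSet W w)).exists_isSol ctx
  have hF : ∀ X ∈ M.V, v' X = (doSet W w X).getD (M.F X ctx v') := by
    intro X hX
    by_cases hXW : X ∈ W
    · simpa [CM.intervene, doSet, hXW] using hv'.1 X (h.1 hX)
    · rw [doSet, if_neg hXW, Option.getD_none]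
      have hW_sub : W ⊆ M.V.erase X := fun Y hY =>
        Finset.mem_erase.2 ⟨by rintro rfl; exact hXW hY, hW hY⟩
      exact h.eq_F_of_isSol hM hM' hX (hv'.intervene_doSet_self hW_sub)
  rw [hM.satF_iff (hM.isSol_indicator hF), hM'.satF_iff hv']
  exact φ.eval_congr fun X hX => Set.indicator_of_mem (Finset.mem_coe.2 (hφ hX)) v'
end

section
/- In the refined rock-throwing model M'_RT with binary endogenous variables ST, BT, SH, BH, BS, equations SH = ST, BH = BT ∧ ¬SH, BS = SH ∨ BH, and the context u in which ST = BT = 1: ST = 1 is an actual cause of BS = 1, but BT = 1 is not an actual cause of BS = 1, according to the HP definition. -/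
open Classical

/-- The refined rock-throwing model: ST = 0, BT = 1, BS = 2, SH = 3, BH = 4;
SH = ST, BH = BT ∧ ¬SH, BS = SH ∨ BH. -/
noncomputable def MRT' : CM :=
  ⟨{0, 1, 2, 3, 4}, fun X ctx g =>
    if X = 3 then g 0
    else if X = 4 then bI (g 1 = 1 ∧ g 3 = 0)
    else if X = 2 then bI (g 3 = 1 ∨ g 4 = 1)
    else ctx 0⟩

/-! Every intervention on `MRT'` has exactly one solution, obtained by evaluating the equations in
the order ST, BT, SH, BH, BS, so `[I]φ` just evaluates `φ` at that solution.

ST = 1 is a cause with witness `W = {BT}`, `w = 0`, `x' = 0`: setting ST = BT = 0 gives BS = 0,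
whereas once ST = 1, SH and BS equal 1 whether or not they are reset to their actual values.

BT = 1 is not a cause: whatever the context, the actual value of BH is 0, since SH and BT both copy
the same exogenous value. Take `Z' = {BH} \ W` in AC2(b). The AC2(b) world then agrees with the
AC2(a) world on ST, SH and on everything in `W`, while its BH is either that of the AC2(a) world or
frozen at 0; as BS is monotone in BH, BS = 1 in the former forces BS = 1 in the latter.

AC3 is automatic for singletons: for `X⃗ = ∅` the interventions of AC2(a) and of AC2(b) with
`W' = W`, `Z' = ∅` coincide, so they cannot give `¬φ` and `φ`. -/

theorem CM.intervene_none (M : CM) : M.intervene (fun _ => none) = M := rfl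

theorem witI_empty_eq_acbI (x' : ℕ → ℕ) (W : Finset ℕ) (w xv vs : ℕ → ℕ) :
    witI ∅ x' W w = acbI ∅ xv ∅ vs W w := by
  funext Y
  simp [witI, acbI]

section Solvable

variable {M : CM} {ctx : ℕ → ℕ}

theorem not_preCause_empty (hsol : ∀ I, ∃ v, IsSol (M.intervene I) ctx v) (xv : ℕ → ℕ)
    (φ : BForm) : ¬ PreCause M ctx ∅ xv φ := by
  rintro ⟨-, W, w, x', -, -, hnot, hφ⟩
  obtain ⟨vs, hvs⟩ := M.intervene_none ▸ hsol fun _ => none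
  obtain ⟨v, hv⟩ := hsol (witI ∅ x' W w)
  rw [witI_empty_eq_acbI x' W w xv vs] at hnot hv
  exact hnot v hv (hφ vs hvs W subset_rfl ∅ (Finset.empty_subset _) v hv)

theorem isCause_singleton_iff (hsol : ∀ I, ∃ v, IsSol (M.intervene I) ctx v) (X : ℕ)
    (xv : ℕ → ℕ) (φ : BForm) : IsCause M ctx {X} xv φ ↔ PreCause M ctx {X} xv φ := by
  refine ⟨And.left, fun h => ⟨h, fun Xs hXs => ?_⟩⟩
  rw [Finset.ssubset_singleton_iff.1 hXs]
  exact not_preCause_empty hsol xv φ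

end Solvable

theorem bI_eq_one {p : Prop} : bI p = 1 ↔ p := by
  by_cases hp : p <;> simp [bI, hp]

namespace MRT'

noncomputable def sol (ctx : ℕ → ℕ) (I : ℕ → Option ℕ) : ℕ → ℕ :=
  fun X =>
    let st := (I 0).getD (ctx 0)
    let bt := (I 1).getD (ctx 0)
    let sh := (I 3).getD st
    let bh := (I 4).getD (bI (bt = 1 ∧ sh = 0))
    let bs := (I 2).getD (bI (sh = 1 ∨ bh = 1))
    if X = 0 then st else if X = 1 then bt else if X = 2 then bs
      else if X = 3 then sh else if X = 4 then bh else 0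

variable (ctx : ℕ → ℕ) (I : ℕ → Option ℕ)

theorem sol_zero : sol ctx I 0 = (I 0).getD (ctx 0) := rfl
theorem sol_one : sol ctx I 1 = (I 1).getD (ctx 0) := rfl
theorem sol_three : sol ctx I 3 = (I 3).getD (sol ctx I 0) := rfl
theorem sol_four :
    sol ctx I 4 = (I 4).getD (bI (sol ctx I 1 = 1 ∧ sol ctx I 3 = 0)) := rfl
theorem sol_two :
    sol ctx I 2 = (I 2).getD (bI (sol ctx I 3 = 1 ∨ sol ctx I 4 = 1)) := rfl

theorem sol_isSol : IsSol (MRT'.intervene I) ctx (sol ctx I) := by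
  refine ⟨fun X hX => ?_, fun X hX => ?_⟩
  · fin_cases hX
    exacts [sol_zero ctx I, sol_one ctx I, sol_two ctx I, sol_three ctx I, sol_four ctx I]
  · simp only [MRT', CM.intervene, Finset.mem_insert, Finset.mem_singleton, not_or] at hX
    simp [sol, hX.1, hX.2.1, hX.2.2.1, hX.2.2.2.1, hX.2.2.2.2]

variable {ctx I}

theorem eq_sol_of_isSol {v : ℕ → ℕ} (h : IsSol (MRT'.intervene I) ctx v) : v = sol ctx I := by
  obtain ⟨heq, hout⟩ := h
  have e : ∀ X ∈ MRT'.V, v X = (I X).getD (MRT'.F X ctx v) := heq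
  have h0 : v 0 = sol ctx I 0 := by rw [sol_zero]; simpa [MRT'] using e 0 (by simp [MRT'])
  have h1 : v 1 = sol ctx I 1 := by rw [sol_one]; simpa [MRT'] using e 1 (by simp [MRT'])
  have h3 : v 3 = sol ctx I 3 := by
    rw [sol_three, ← h0]; simpa [MRT'] using e 3 (by simp [MRT'])
  have h4 : v 4 = sol ctx I 4 := by
    rw [sol_four, ← h1, ← h3]; simpa [MRT'] using e 4 (by simp [MRT'])
  have h2 : v 2 = sol ctx I 2 := by
    rw [sol_two, ← h3, ← h4]; simpa [MRT'] using e 2 (by simp [MRT'])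
  funext X
  by_cases hX : X ∈ MRT'.V
  · fin_cases hX <;> assumption
  · rw [hout X hX, (sol_isSol ctx I).2 X hX]

theorem satF_iff {φ : BForm} : SatF MRT' ctx I φ ↔ φ.eval (sol ctx I) :=
  ⟨fun h => h _ (sol_isSol ctx I), fun h _ hv => eq_sol_of_isSol hv ▸ h⟩

theorem isSol_iff {v : ℕ → ℕ} : IsSol MRT' ctx v ↔ v = sol ctx fun _ => none :=
  ⟨fun h => eq_sol_of_isSol (MRT'.intervene_none ▸ h),
    fun h => h ▸ MRT'.intervene_none ▸ sol_isSol ctx fun _ => none⟩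

theorem sol_none_four : sol ctx (fun _ => none) 4 = 0 := by
  by_cases h : ctx 0 = 1 <;> simp [sol, bI, h]

theorem sol_two_eq_one_mono {J : ℕ → Option ℕ} (h2 : I 2 = J 2)
    (h3 : sol ctx J 3 = 1 → sol ctx I 3 = 1) (h4 : sol ctx J 4 = 1 → sol ctx I 4 = 1)
    (hJ : sol ctx J 2 = 1) : sol ctx I 2 = 1 := by
  rw [sol_two, h2] at *
  cases hJ2 : J 2 with
  | some b => simpa [hJ2] using hJ
  | none =>
    simp only [hJ2, Option.getD_none, bI_eq_one] at hJ ⊢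
    exact hJ.imp h3 h4

theorem ac1_of_subset {Xs : Finset ℕ} (hXs : Xs ⊆ {0, 1}) :
    AC1 MRT' (fun _ => 1) Xs (fun _ => 1) (.prim 2 1) := by
  intro v hv
  rw [isSol_iff] at hv
  subst hv
  refine ⟨fun X hX => ?_, by simp [BForm.eval, sol, bI]⟩
  rcases Finset.mem_insert.1 (hXs hX) with rfl | hX1
  · rfl
  · rw [Finset.mem_singleton.1 hX1]; rfl

theorem wit_ST :
    Wit MRT' (fun _ => 1) {0} (fun _ => 1) (.prim 2 1) {1} (fun _ => 0) (fun _ => 0) := by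
  refine ⟨by simp [MRT'], by simp [MRT'], ?_, fun vs hvs W' hW' Z' _ => ?_⟩
  · simp [satF_iff, BForm.eval, sol, witI, bI]
  · rw [isSol_iff] at hvs
    subst hvs
    have h2 : 2 ∉ W' := fun h => by simpa using hW' h
    have h3 : 3 ∉ W' := fun h => by simpa using hW' h
    rw [satF_iff]
    by_cases 2 ∈ Z' <;> by_cases 3 ∈ Z' <;> simp [BForm.eval, sol, acbI, bI, *]

theorem not_wit_BT {ctx xv : ℕ → ℕ} {W : Finset ℕ} {w x' : ℕ → ℕ} :
    ¬ Wit MRT' ctx {1} xv (.prim 2 1) W w x' := by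
  rintro ⟨-, -, hnot, hφ⟩
  set vs := sol ctx fun _ => none
  have hZ : {4} \ W ⊆ MRT'.V \ W := Finset.sdiff_subset_sdiff (by simp [MRT']) subset_rfl
  have hb := satF_iff.1 (hφ vs (isSol_iff.2 rfl) W subset_rfl ({4} \ W) hZ)
  refine satF_iff.1 hnot (sol_two_eq_one_mono ?_ ?_ ?_ hb)
  · simp [witI, acbI]
  · simp [sol_three, sol_zero, witI, acbI]
  · by_cases h4 : 4 ∈ W
    · simp [sol_four, witI, acbI, h4]
    · have hJ4 : sol ctx (acbI {1} xv ({4} \ W) vs W w) 4 = vs 4 := by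
        simp [sol_four, acbI, h4]
      simp [hJ4, vs, sol_none_four]

end MRT'

/-- in the refined rock-throwing model, in the context where
ST = BT = 1, ST = 1 is an actual cause of BS = 1 but BT = 1 is not. -/
theorem refined_rock_throwing :
    IsCause MRT' (fun _ => 1) {0} (fun _ => 1) (.prim 2 1) ∧
    ¬ IsCause MRT' (fun _ => 1) {1} (fun _ => 1) (.prim 2 1) := by
  have hsol : ∀ I, ∃ v, IsSol (MRT'.intervene I) (fun _ => 1) v :=
    fun I => ⟨_, MRT'.sol_isSol _ I⟩
  refine ⟨(isCause_singleton_iff hsol 0 _ _).2 ?_, ?_⟩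
  · exact ⟨MRT'.ac1_of_subset (by simp), _, _, _, MRT'.wit_ST⟩
  · rintro ⟨⟨-, _, _, _, hwit⟩, -⟩
    exact MRT'.not_wit_BT hwit
end
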